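/- Let X₁,…,X_N be independent random vectors in R^n with ‖X_i‖₂ ≤ K√n a.s. and sup_{x∈S^{n-1}} (E|⟨X_i,x⟩|^q)^{1/q} ≤ L for some q > 4. Then for every t ≥ 1, with probability at least 1 − C t^{−q}: for every nonempty subset E ⊆ {1,…,N} and every k ≤ N, (1/|E|) Σ_{i ∈ E, i ≠ k} ⟨X_i, X_k⟩² ≤ C_q t² K² L² (N/|E|)^{4/q} n, where C is absolute and C_q depends only on q. -/

import Mathlib

/-!
Put `λₘ = t K √n L (N / m)^(2/q)`. Call a pair `(k, S)` with `k ∉ S ≠ ∅` bad if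
`|⟪X j, X k⟫| > λ_{|S|}` for every `j ∈ S`. Conditionally on `X k` these are independent events,
each of probability at most `(K √n L / λ)^q` by Markov's inequality, so a fixed pair with
`|S| = m` is bad with probability at most `(t^(-q) (m/N)^2)^m`. Since `C(N, m) ≤ (e N / m)^m`,
a union bound over all pairs costs at most `∑ₘ m (e t^(-q))^m ≤ 4 e t^(-q)`.

If no pair is bad, every nonempty `S ⊆ E \ {k}` contains some `j` with
`|⟪X j, X k⟫| ≤ λ_{|S|}`; removing such indices one at a time gives
`∑_{i ∈ E \ {k}} ⟪X i, X k⟫² ≤ ∑_{m ≤ |E|} λₘ²`, and comparing `∑_{m ≤ M} m^(-4/q)` with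
`M^(1 - 4/q) / (1 - 4/q)` yields the constant `q / (q - 4)`.
-/

open MeasureTheory ProbabilityTheory Finset Real
open scoped RealInnerProductSpace

theorem Finset.sum_le_sum_range_of_forall_exists_le {ι M : Type*} [DecidableEq ι]
    [AddCommMonoid M] [PartialOrder M] [IsOrderedAddMonoid M] {f : ι → M} {b : ℕ → M}
    (s : Finset ι) (h : ∀ t ⊆ s, t.Nonempty → ∃ i ∈ t, f i ≤ b #t) :
    ∑ i ∈ s, f i ≤ ∑ i ∈ range #s, b (i + 1) := by
  induction s using Finset.strongInduction with
  | _ s ih =>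
    rcases s.eq_empty_or_nonempty with rfl | hs
    · simp
    obtain ⟨i, hi, hfi⟩ := h s subset_rfl hs
    have hcard : #s = #(s.erase i) + 1 := (card_erase_add_one hi).symm
    calc ∑ j ∈ s, f j = f i + ∑ j ∈ s.erase i, f j := (add_sum_erase _ _ hi).symm
      _ ≤ b #s + ∑ j ∈ range #(s.erase i), b (j + 1) :=
        add_le_add hfi <| ih _ (erase_ssubset hi) fun t ht => h t (ht.trans (erase_subset _ _))
      _ = ∑ j ∈ range #s, b (j + 1) := by rw [hcard, sum_range_succ, add_comm]

theorem rpow_one_sub_add_mul_rpow_neg_le {α x : ℝ} (hα0 : 0 ≤ α) (hα1 : α ≤ 1)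
    (hx : 0 ≤ x) :
    x ^ (1 - α) + (1 - α) * (x + 1) ^ (-α) ≤ (x + 1) ^ (1 - α) := by
  have hx1 : 0 < x + 1 := by linarith
  have amgm : x ^ (1 - α) * (x + 1) ^ α ≤ x + α := by
    linarith [geom_mean_le_arith_mean2_weighted (by linarith) hα0 hx hx1.le (by ring :
      1 - α + α = 1)]
  have hsplit : (x + 1) ^ (1 - α) = (x + 1) * (x + 1) ^ (-α) := by
    rw [sub_eq_add_neg, rpow_add hx1, rpow_one]
  have hneg : (x + 1) ^ (-α) * (x + 1) ^ α = 1 := by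
    rw [← rpow_add hx1, neg_add_cancel, rpow_zero]
  have : x ^ (1 - α) ≤ (x + α) * (x + 1) ^ (-α) := by
    calc x ^ (1 - α) = x ^ (1 - α) * (x + 1) ^ α * (x + 1) ^ (-α) := by
          rw [mul_assoc, mul_comm ((x + 1) ^ α), hneg, mul_one]
      _ ≤ (x + α) * (x + 1) ^ (-α) := by gcongr
  rw [hsplit]
  linarith

theorem one_sub_mul_sum_range_rpow_neg_le {α : ℝ} (hα0 : 0 ≤ α) (hα1 : α ≤ 1) (m : ℕ) :
    (1 - α) * ∑ i ∈ range m, ((i : ℝ) + 1) ^ (-α) ≤ (m : ℝ) ^ (1 - α) := by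
  induction m with
  | zero => simpa using rpow_nonneg le_rfl _
  | succ m ih =>
    rw [sum_range_succ, mul_add, Nat.cast_succ]
    linarith [rpow_one_sub_add_mul_rpow_neg_le hα0 hα1 m.cast_nonneg]

theorem sum_range_div_rpow_le {a γ : ℝ} (ha : 0 ≤ a) (hγ0 : 0 ≤ γ) (hγ1 : γ < 1)
    (m : ℕ) :
    ∑ i ∈ range m, (a / (i + 1)) ^ γ ≤ m * (a / m) ^ γ / (1 - γ) := by
  have hγ : 0 < 1 - γ := by linarith
  have hterm : ∀ i : ℕ, (a / (i + 1)) ^ γ = a ^ γ * ((i : ℝ) + 1) ^ (-γ) := fun i => by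
    rw [div_rpow ha (by positivity), rpow_neg (by positivity), div_eq_mul_inv]
  have hm : (m : ℝ) * (a / m) ^ γ = a ^ γ * (m : ℝ) ^ (1 - γ) := by
    rcases m.eq_zero_or_pos with rfl | hm
    · simp [zero_rpow hγ.ne']
    have hm : (0 : ℝ) < m := by exact_mod_cast hm
    rw [div_rpow ha hm.le, rpow_sub hm, rpow_one]
    field_simp
  rw [sum_congr rfl fun i _ => hterm i, ← mul_sum, hm, le_div_iff₀ hγ, mul_assoc,
    mul_comm _ (1 - γ)]
  exact mul_le_mul_of_nonneg_left (one_sub_mul_sum_range_rpow_neg_le hγ0 hγ1.le m)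
    (rpow_nonneg ha _)

theorem mul_choose_mul_pow_le {N m : ℕ} (hm : 1 ≤ m) (hmN : m ≤ N) {x : ℝ} (hx : 0 ≤ x) :
    N * (N.choose m * (x * (m / N) ^ 2) ^ m) ≤ m * (exp 1 * x) ^ m := by
  have hN : (0 : ℝ) < N := by exact_mod_cast hm.trans hmN
  have hr0 : (0 : ℝ) ≤ m / N := by positivity
  have hr1 : (m : ℝ) / N ≤ 1 := div_le_one_of_le₀ (by exact_mod_cast hmN) hN.le
  have hchoose : N.choose m * (m / N : ℝ) ^ m ≤ exp 1 ^ m := by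
    calc N.choose m * (m / N : ℝ) ^ m ≤ N ^ m / m.factorial * (m / N : ℝ) ^ m := by
          gcongr; exact Nat.choose_le_pow_div m N
      _ = (m : ℝ) ^ m / m.factorial := by rw [div_pow]; field_simp
      _ ≤ exp m := pow_div_factorial_le_exp _ m.cast_nonneg m
      _ = exp 1 ^ m := by rw [← exp_nat_mul, mul_one]
  have hlin : N * (m / N : ℝ) ^ m ≤ m := by
    calc N * (m / N : ℝ) ^ m ≤ N * (m / N) := by
          gcongr; exact pow_le_of_le_one hr0 hr1 (by omega)
      _ = m := by field_simp
  calc (N : ℝ) * (N.choose m * (x * (m / N) ^ 2) ^ m)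
      = x ^ m * (N.choose m * (m / N : ℝ) ^ m) * (N * (m / N : ℝ) ^ m) := by ring
    _ ≤ x ^ m * exp 1 ^ m * m := by gcongr
    _ = m * (exp 1 * x) ^ m := by ring

theorem sum_Icc_mul_pow_le {y : ℝ} (hy0 : 0 ≤ y) (hy : 4 * y ≤ 1) (N : ℕ) :
    ∑ m ∈ Icc 1 N, (m : ℝ) * y ^ m ≤ 4 * y := by
  calc ∑ m ∈ Icc 1 N, (m : ℝ) * y ^ m ≤ ∑ m ∈ Ico 1 (N + 1), (2 * y) ^ m := by
        refine sum_le_sum fun m _ => ?_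
        rw [mul_pow]
        gcongr
        exact_mod_cast m.lt_two_pow_self.le
    _ ≤ (2 * y) ^ 1 / (1 - 2 * y) := geom_sum_Ico_le_of_lt_one (by positivity) (by linarith)
    _ ≤ 4 * y := by
        rw [pow_one, div_le_iff₀ (by linarith)]
        nlinarith

theorem mul_sum_choose_mul_pow_le (N : ℕ) {x : ℝ} (hx : 0 ≤ x) (h : 4 * exp 1 * x ≤ 1) :
    N * ∑ m ∈ Icc 1 N, N.choose m * (x * (m / N) ^ 2) ^ m ≤ 4 * exp 1 * x := by
  rw [mul_sum, mul_assoc]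
  calc ∑ m ∈ Icc 1 N, (N : ℝ) * (N.choose m * (x * (m / N) ^ 2) ^ m)
      ≤ ∑ m ∈ Icc 1 N, (m : ℝ) * (exp 1 * x) ^ m := by
        refine sum_le_sum fun m hm => ?_
        rw [mem_Icc] at hm
        exact mul_choose_mul_pow_le hm.1 hm.2 hx
    _ ≤ 4 * (exp 1 * x) := sum_Icc_mul_pow_le (by positivity) (by linarith) N

theorem mean_sum_sq_le_of_forall_exists_abs_le {ι : Type*} [DecidableEq ι] {Z : ι → ℝ}
    {s a β : ℝ} (ha : 0 ≤ a) (hβ0 : 0 ≤ β) (hβ1 : 2 * β < 1) {F : Finset ι}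
    (h : ∀ S ⊆ F, S.Nonempty → ∃ j ∈ S, |Z j| ≤ s * (a / #S) ^ β) {m : ℕ}
    (hm0 : 0 < m) (hm : #F ≤ m) :
    1 / m * ∑ j ∈ F, Z j ^ 2 ≤ s ^ 2 / (1 - 2 * β) * (a / m) ^ (2 * β) := by
  have hsq : ∀ S ⊆ F, S.Nonempty →
      ∃ j ∈ S, Z j ^ 2 ≤ s ^ 2 * (a / (#S : ℕ)) ^ (2 * β) := by
    intro S hS hne
    obtain ⟨j, hj, hZ⟩ := h S hS hne
    refine ⟨j, hj, ?_⟩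
    calc Z j ^ 2 = |Z j| ^ 2 := (sq_abs _).symm
      _ ≤ (s * (a / #S) ^ β) ^ 2 := pow_le_pow_left₀ (abs_nonneg _) hZ 2
      _ = s ^ 2 * (a / #S) ^ (2 * β) := by
        rw [mul_pow, ← rpow_natCast ((a / #S) ^ β), ← rpow_mul (by positivity), mul_comm β]
        norm_num
  have hsum : ∑ j ∈ F, Z j ^ 2 ≤ s ^ 2 * (m * (a / m) ^ (2 * β) / (1 - 2 * β)) := by
    calc ∑ j ∈ F, Z j ^ 2
        ≤ ∑ i ∈ range #F, s ^ 2 * (a / ((i + 1 : ℕ) : ℝ)) ^ (2 * β) :=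
          F.sum_le_sum_range_of_forall_exists_le (f := fun j => Z j ^ 2)
            (b := fun m => s ^ 2 * (a / (m : ℕ)) ^ (2 * β)) hsq
      _ ≤ ∑ i ∈ range m, s ^ 2 * (a / (i + 1)) ^ (2 * β) := by
          push_cast
          exact sum_le_sum_of_subset_of_nonneg (range_subset_range.mpr hm)
            fun _ _ _ => by positivity
      _ ≤ s ^ 2 * (m * (a / m) ^ (2 * β) / (1 - 2 * β)) := by
          rw [← mul_sum]
          gcongr
          exact sum_range_div_rpow_le ha (by positivity) hβ1 m
  have hm0' : (0 : ℝ) < m := by exact_mod_cast hm0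
  calc 1 / m * ∑ j ∈ F, Z j ^ 2
      ≤ 1 / m * (s ^ 2 * (m * (a / m) ^ (2 * β) / (1 - 2 * β))) := by gcongr
    _ = s ^ 2 / (1 - 2 * β) * (a / m) ^ (2 * β) := by field_simp

theorem mean_sum_sq_erase_le_of_not_exists_lt_abs {ι : Type*} [Fintype ι] [DecidableEq ι]
    {Z : ι → ι → ℝ} {s β : ℝ} (hβ0 : 0 ≤ β) (hβ1 : 2 * β < 1)
    (h : ¬ ∃ k, ∃ S ⊆ univ.erase k, S.Nonempty ∧
      ∀ j ∈ S, s * (Fintype.card ι / #S) ^ β < |Z j k|)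
    {E : Finset ι} (hE : E.Nonempty) (k : ι) :
    1 / #E * ∑ j ∈ E.erase k, Z j k ^ 2 ≤
      s ^ 2 / (1 - 2 * β) * (Fintype.card ι / #E) ^ (2 * β) := by
  push Not at h
  exact mean_sum_sq_le_of_forall_exists_abs_le (Z := (Z · k)) (Nat.cast_nonneg _) hβ0 hβ1
    (fun S hS hne => h k S (hS.trans (erase_subset_erase k (subset_univ E))) hne)
    hE.card_pos card_erase_le

theorem rpow_div_mul_rpow_eq {b t a q : ℝ} (hb : 0 < b) (ht : 0 < t) (ha : 0 < a) (hq : q ≠ 0) :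
    (b / (t * b * a ^ (2 / q))) ^ q = t ^ (-q) * a⁻¹ ^ 2 := by
  have hexp : (a ^ (2 / q)) ^ q = a ^ 2 := by
    rw [← rpow_mul ha.le, div_mul_cancel₀ _ hq, show (2 : ℝ) = (2 : ℕ) by norm_num,
      rpow_natCast]
  rw [show b / (t * b * a ^ (2 / q)) = (t * a ^ (2 / q))⁻¹ by field_simp,
    inv_rpow (by positivity), mul_rpow ht.le (by positivity), hexp, mul_inv, rpow_neg ht.le,
    inv_pow]

section Tail

variable {Ω E : Type*} [MeasurableSpace Ω] {μ : Measure Ω}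
  [NormedAddCommGroup E] [InnerProductSpace ℝ E]

theorem one_sub_le_measureReal_of_compl_le [IsProbabilityMeasure μ] {s : Set Ω} {ε : ℝ}
    (h : μ.real sᶜ ≤ ε) : 1 - ε ≤ μ.real s := by
  have := measureReal_union_le (μ := μ) s sᶜ
  rw [Set.union_compl_self, probReal_univ] at this
  linarith

theorem measureReal_lt_abs_le_of_integral_rpow_le [IsFiniteMeasure μ] {Z : Ω → ℝ}
    {q M c : ℝ} (hq : 0 < q) (hc : 0 < c) (hint : Integrable (fun ω => |Z ω| ^ q) μ)
    (hmom : (∫ ω, |Z ω| ^ q ∂μ) ^ (1 / q) ≤ M) :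
    μ.real {ω | c < |Z ω|} ≤ (M / c) ^ q := by
  have hI : 0 ≤ ∫ ω, |Z ω| ^ q ∂μ := integral_nonneg fun ω => rpow_nonneg (abs_nonneg _) _
  have hM : 0 ≤ M := (rpow_nonneg hI _).trans hmom
  have hIM : ∫ ω, |Z ω| ^ q ∂μ ≤ M ^ q := by
    calc ∫ ω, |Z ω| ^ q ∂μ = ((∫ ω, |Z ω| ^ q ∂μ) ^ (1 / q)) ^ q := by
          rw [← rpow_mul hI, one_div_mul_cancel hq.ne', rpow_one]
      _ ≤ M ^ q := by gcongr
  have hmarkov := mul_meas_ge_le_integral_of_nonneg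
    (Filter.Eventually.of_forall fun ω => rpow_nonneg (abs_nonneg (Z ω)) q) hint (c ^ q)
  have hsub : {ω | c < |Z ω|} ⊆ {ω | c ^ q ≤ |Z ω| ^ q} := fun ω hω =>
    rpow_le_rpow hc.le (le_of_lt hω) hq.le
  rw [div_rpow hM hc.le, le_div_iff₀ (rpow_pos_of_pos hc q), mul_comm]
  calc c ^ q * μ.real {ω | c < |Z ω|} ≤ c ^ q * μ.real {ω | c ^ q ≤ |Z ω| ^ q} :=
        mul_le_mul_of_nonneg_left (measureReal_mono hsub) (by positivity)
    _ ≤ M ^ q := hmarkov.trans hIM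

theorem integral_rpow_abs_inner_rpow_le {Y : Ω → E} {q L : ℝ} (hq : 0 < q)
    (hmom : ∀ u : E, ‖u‖ = 1 → (∫ ω, |⟪Y ω, u⟫| ^ q ∂μ) ^ (1 / q) ≤ L) (x : E) :
    (∫ ω, |⟪Y ω, x⟫| ^ q ∂μ) ^ (1 / q) ≤ ‖x‖ * L := by
  rcases eq_or_ne x 0 with rfl | hx
  · simp [zero_rpow hq.ne', zero_rpow (inv_ne_zero hq.ne')]
  have hxu : x = ‖x‖ • (‖x‖⁻¹ • x) := by
    rw [smul_smul, mul_inv_cancel₀ (norm_ne_zero_iff.mpr hx), one_smul]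
  have hscale : ∀ ω, |⟪Y ω, x⟫| ^ q = ‖x‖ ^ q * |⟪Y ω, ‖x‖⁻¹ • x⟫| ^ q := by
    intro ω
    conv_lhs => rw [hxu]
    rw [real_inner_smul_right, abs_mul, abs_norm, mul_rpow (norm_nonneg _) (abs_nonneg _)]
  simp_rw [hscale, integral_const_mul]
  rw [mul_rpow (rpow_nonneg (norm_nonneg _) _)
      (integral_nonneg fun ω => rpow_nonneg (abs_nonneg _) _),
    ← rpow_mul (norm_nonneg _), mul_one_div_cancel hq.ne', rpow_one]
  gcongr
  exact hmom _ (norm_smul_inv_norm hx)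

variable [MeasurableSpace E] [BorelSpace E] [SecondCountableTopology E]

theorem measureReal_lt_abs_inner_le [IsFiniteMeasure μ] {Y : Ω → E} (hY : AEMeasurable Y μ)
    {B q L c : ℝ} (hYB : ∀ᵐ ω ∂μ, ‖Y ω‖ ≤ B) (hq : 0 < q) (hc : 0 < c)
    (hmom : ∀ u : E, ‖u‖ = 1 → (∫ ω, |⟪Y ω, u⟫| ^ q ∂μ) ^ (1 / q) ≤ L) (x : E) :
    μ.real {ω | c < |⟪Y ω, x⟫|} ≤ (‖x‖ * L / c) ^ q := by
  refine measureReal_lt_abs_le_of_integral_rpow_le hq hc ?_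
    (integral_rpow_abs_inner_rpow_le hq hmom x)
  refine Integrable.of_bound ((hY.inner aemeasurable_const).abs.pow_const q).aestronglyMeasurable
    ((B * ‖x‖) ^ q) ?_
  filter_upwards [hYB] with ω hω
  rw [norm_eq_abs, abs_of_nonneg (rpow_nonneg (abs_nonneg _) _)]
  exact rpow_le_rpow (abs_nonneg _)
    ((abs_real_inner_le_norm _ _).trans (by gcongr)) hq.le

end Tail

theorem ProbabilityTheory.IndepFun.measure_preimage_prod_le {Ω α β : Type*} [MeasurableSpace Ω]
    [MeasurableSpace α] [MeasurableSpace β] {μ : Measure Ω} [IsFiniteMeasure μ]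
    {f : Ω → α} {g : Ω → β} (hfg : IndepFun f g μ) (hf : Measurable f) (hg : Measurable g)
    {T : Set (α × β)} (hT : MeasurableSet T) {c : ENNReal}
    (h : ∀ᵐ a ∂μ.map f, μ (g ⁻¹' (Prod.mk a ⁻¹' T)) ≤ c) :
    μ ((fun ω => (f ω, g ω)) ⁻¹' T) ≤ c * μ Set.univ := by
  rw [← Measure.map_apply (hf.prodMk hg) hT,
    (indepFun_iff_map_prod_eq_prod_map_map hf.aemeasurable hg.aemeasurable).mp hfg,
    Measure.prod_apply hT]
  calc ∫⁻ a, μ.map g (Prod.mk a ⁻¹' T) ∂μ.map f ≤ ∫⁻ _, c ∂μ.map f := by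
        refine lintegral_mono_ae ?_
        filter_upwards [h] with a ha
        rwa [Measure.map_apply hg (measurable_prodMk_left hT)]
    _ = c * μ Set.univ := by rw [lintegral_const, Measure.map_apply hf MeasurableSet.univ,
        Set.preimage_univ]

section Independent

variable {Ω E ι : Type*} [MeasurableSpace Ω] {μ : Measure Ω} [IsProbabilityMeasure μ]
  [NormedAddCommGroup E] [InnerProductSpace ℝ E] [MeasurableSpace E] [BorelSpace E]
  [SecondCountableTopology E] {X : ι → Ω → E} {B q L : ℝ}

theorem measureReal_forall_lt_abs_inner_le (hXm : ∀ i, Measurable (X i)) (hind : iIndepFun X μ)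
    (hq : 0 < q) (hB : 0 ≤ B) (hL : 0 ≤ L) (hnorm : ∀ i, ∀ᵐ ω ∂μ, ‖X i ω‖ ≤ B)
    (hmom : ∀ i, ∀ u : E, ‖u‖ = 1 → (∫ ω, |⟪X i ω, u⟫| ^ q ∂μ) ^ (1 / q) ≤ L)
    {c : ℝ} (hc : 0 < c) {k : ι} {S : Finset ι} (hkS : k ∉ S) :
    μ.real {ω | ∀ j ∈ S, c < |⟪X j ω, X k ω⟫|} ≤ ((B * L / c) ^ q) ^ #S := by
  set Y : Ω → S → E := fun ω j => X j ω
  have hY : Measurable Y := measurable_pi_lambda _ fun j => hXm j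
  have hindep : IndepFun (X k) Y μ :=
    (hind.indepFun_finset {k} S (disjoint_singleton_left.mpr hkS) hXm).comp
      (show Measurable fun y : ({k} : Finset ι) → E => y ⟨k, mem_singleton_self k⟩ from
        measurable_pi_apply _) measurable_id
  set T : Set (E × (S → E)) := {p | ∀ j : S, c < |⟪p.2 j, p.1⟫|}
  have hT : MeasurableSet T := by
    simp only [T, Set.ofPred_forall]
    exact MeasurableSet.iInter fun j => measurableSet_lt measurable_const (by fun_prop)
  have hslice : ∀ x : E, ‖x‖ ≤ B →
      μ (Y ⁻¹' (Prod.mk x ⁻¹' T)) ≤ ENNReal.ofReal (((B * L / c) ^ q) ^ #S) := by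
    intro x hx
    have hset : Y ⁻¹' (Prod.mk x ⁻¹' T) = ⋂ j ∈ S, X j ⁻¹' {z | c < |⟪z, x⟫|} := by
      ext ω; simp [T, Y]
    rw [hset, hind.measure_inter_preimage_eq_mul S fun j _ =>
        measurableSet_lt measurable_const (by fun_prop),
      ENNReal.ofReal_pow (by positivity), ← prod_const]
    refine prod_le_prod' fun j _ => ?_
    rw [← ofReal_measureReal]
    refine ENNReal.ofReal_le_ofReal ((measureReal_lt_abs_inner_le (hXm j).aemeasurable
      (hnorm j) hq hc (hmom j) x).trans ?_)
    gcongr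
  have hbound := hindep.measure_preimage_prod_le (hXm k) hY hT <|
    ((ae_map_iff (hXm k).aemeasurable (measurableSet_le (by fun_prop) (by fun_prop))).mpr
      (hnorm k)).mono hslice
  rw [measure_univ, mul_one] at hbound
  calc μ.real {ω | ∀ j ∈ S, c < |⟪X j ω, X k ω⟫|}
      = μ.real ((fun ω => (X k ω, Y ω)) ⁻¹' T) := by congr 1; ext; simp [T, Y]
    _ ≤ ((B * L / c) ^ q) ^ #S :=
      ENNReal.toReal_le_of_le_ofReal (by positivity) hbound

theorem measureReal_exists_forall_lt_abs_inner_le [Fintype ι] [DecidableEq ι]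
    (hXm : ∀ i, Measurable (X i)) (hind : iIndepFun X μ)
    (hq : 0 < q) (hB : 0 ≤ B) (hL : 0 ≤ L) (hnorm : ∀ i, ∀ᵐ ω ∂μ, ‖X i ω‖ ≤ B)
    (hmom : ∀ i, ∀ u : E, ‖u‖ = 1 → (∫ ω, |⟪X i ω, u⟫| ^ q ∂μ) ^ (1 / q) ≤ L)
    {c : ℕ → ℝ} (hc : ∀ m ∈ Icc 1 (Fintype.card ι), 0 < c m) :
    μ.real {ω | ∃ k, ∃ S ⊆ univ.erase k, S.Nonempty ∧
      ∀ j ∈ S, c #S < |⟪X j ω, X k ω⟫|} ≤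
      Fintype.card ι * ∑ m ∈ Icc 1 (Fintype.card ι),
        (Fintype.card ι).choose m * ((B * L / c m) ^ q) ^ m := by
  set N := Fintype.card ι
  have hsub : {ω | ∃ k, ∃ S ⊆ univ.erase k, S.Nonempty ∧
        ∀ j ∈ S, c #S < |⟪X j ω, X k ω⟫|} ⊆
      ⋃ k ∈ univ, ⋃ m ∈ Icc 1 N, ⋃ S ∈ powersetCard m (univ.erase k),
        {ω | ∀ j ∈ S, c m < |⟪X j ω, X k ω⟫|} := by
    rintro ω ⟨k, S, hS, hne, hω⟩
    simp only [Set.mem_iUnion, exists_prop, mem_univ, true_and, mem_Icc, mem_powersetCard]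
    exact ⟨k, #S, ⟨hne.card_pos, card_le_univ S⟩, S, ⟨hS, rfl⟩, hω⟩
  calc _ ≤ ∑ k, ∑ m ∈ Icc 1 N, ∑ S ∈ powersetCard m (univ.erase k),
        μ.real {ω | ∀ j ∈ S, c m < |⟪X j ω, X k ω⟫|} := by
        refine (measureReal_mono hsub (measure_ne_top _ _)).trans <|
          (measureReal_biUnion_finset_le _ _).trans (sum_le_sum fun k _ => ?_)
        exact (measureReal_biUnion_finset_le _ _).trans
          (sum_le_sum fun m _ => measureReal_biUnion_finset_le _ _)
    _ ≤ ∑ k : ι, ∑ m ∈ Icc 1 N, ∑ S ∈ powersetCard m (univ.erase k),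
        ((B * L / c m) ^ q) ^ m := by
        gcongr with k _ m hm S hS
        rw [mem_powersetCard] at hS
        have hkS : k ∉ S := fun h => by simpa using hS.1 h
        simpa [hS.2] using measureReal_forall_lt_abs_inner_le hXm hind hq hB hL hnorm hmom
          (hc m hm) hkS
    _ ≤ _ := by
        simp only [sum_const, card_powersetCard, card_erase_of_mem (mem_univ _), card_univ,
          nsmul_eq_mul]
        gcongr with m hm
        · exact pow_nonneg (rpow_nonneg
            (div_nonneg (mul_nonneg hB hL) (hc m hm).le) _) _
        · exact Nat.sub_le _ 1

theorem measureReal_exists_forall_lt_abs_inner_le_four_mul_exp [Fintype ι] [DecidableEq ι]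
    (hXm : ∀ i, Measurable (X i)) (hind : iIndepFun X μ)
    (hq : 0 < q) (hB : 0 < B) (hL : 0 < L) (hnorm : ∀ i, ∀ᵐ ω ∂μ, ‖X i ω‖ ≤ B)
    (hmom : ∀ i, ∀ u : E, ‖u‖ = 1 → (∫ ω, |⟪X i ω, u⟫| ^ q ∂μ) ^ (1 / q) ≤ L)
    {t : ℝ} (ht : 0 < t) (hsmall : 4 * exp 1 * t ^ (-q) ≤ 1) :
    μ.real {ω | ∃ k, ∃ S ⊆ univ.erase k, S.Nonempty ∧
      ∀ j ∈ S, t * (B * L) * (Fintype.card ι / #S) ^ (2 / q) < |⟪X j ω, X k ω⟫|} ≤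
      4 * exp 1 * t ^ (-q) := by
  set N := Fintype.card ι
  have hratio : ∀ m ∈ Icc 1 N, (0 : ℝ) < N / m := fun m hm => by
    obtain ⟨hm1, hmN⟩ := mem_Icc.mp hm
    exact div_pos (by exact_mod_cast hm1.trans hmN) (by exact_mod_cast hm1)
  calc _ ≤ N * ∑ m ∈ Icc 1 N,
        N.choose m * ((B * L / (t * (B * L) * (N / m) ^ (2 / q))) ^ q) ^ m :=
        measureReal_exists_forall_lt_abs_inner_le hXm hind hq hB.le hL.le hnorm hmom
          fun m hm => by have := hratio m hm; positivity
    _ = N * ∑ m ∈ Icc 1 N, N.choose m * (t ^ (-q) * (m / N) ^ 2) ^ m := by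
        refine congrArg _ (sum_congr rfl fun m hm => ?_)
        rw [rpow_div_mul_rpow_eq (mul_pos hB hL) ht (hratio m hm) hq.ne', inv_div]
    _ ≤ 4 * exp 1 * t ^ (-q) := mul_sum_choose_mul_pow_le N (by positivity) hsmall

end Independent

/-- There is an absolute constant `C` and, for each `q > 4`, a constant `C_q`, such that
for independent random vectors `X_i` in `ℝⁿ` with `‖X_i‖ ≤ K√n` a.s. and `q`-th marginal
moments at most `L`, for every `t ≥ 1`, with probability at least `1 − C t^{−q}`:
for every nonempty `E ⊆ {1,…,N}` and every `k`,
`(1/|E|) Σ_{i∈E, i≠k} ⟪X_i,X_k⟫² ≤ C_q t² K² L² (N/|E|)^{4/q} n`. -/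
theorem pairwise_inner_sums_bound :
    ∃ C : ℝ, 0 < C ∧
      ∀ {q : ℝ}, 4 < q →
        ∃ Cq : ℝ, 0 < Cq ∧
          ∀ {Ω : Type} [MeasurableSpace Ω] (μ : Measure Ω) [IsProbabilityMeasure μ]
            {n N : ℕ} (X : Fin N → Ω → EuclideanSpace ℝ (Fin n))
            (_ : ∀ i, Measurable (X i))
            (_ : iIndepFun X μ)
            {K L : ℝ} (_ : 0 < K) (_ : 0 < L)
            (_ : ∀ i, ∀ᵐ ω ∂μ, ‖X i ω‖ ≤ K * Real.sqrt n)
            (_ : ∀ i, ∀ x : EuclideanSpace ℝ (Fin n), ‖x‖ = 1 →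
              (∫ ω, |⟪X i ω, x⟫| ^ q ∂μ) ^ (1 / q) ≤ L)
            (t : ℝ) (_ : 1 ≤ t),
            1 - C * t ^ (-q) ≤
              (μ {ω | ∀ E : Finset (Fin N), E.Nonempty → ∀ k : Fin N,
                (1 / (E.card : ℝ)) * ∑ i ∈ E.erase k, ⟪X i ω, X k ω⟫ ^ 2 ≤
                  Cq * t ^ 2 * K ^ 2 * L ^ 2 *
                    ((N : ℝ) / E.card) ^ (4 / q) * n}).toReal := by
  refine ⟨4 * exp 1, by positivity, fun {q} hq =>
    ⟨q / (q - 4), div_pos (by linarith) (by linarith), ?_⟩⟩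
  intro Ω _ μ _ n N X hXm hind K L hK hL hnorm hmom t ht
  have hq0 : 0 < q := by linarith
  refine one_sub_le_measureReal_of_compl_le ?_
  rcases n.eq_zero_or_pos with rfl | hn
  · refine (measureReal_mono (s₂ := ∅)
      (Set.compl_subset_comm.mp fun ω _ E _ k => ?_)).trans ?_
    · simp [Subsingleton.elim (X k ω) 0]
    · rw [measureReal_empty]; positivity
  rcases lt_or_ge 1 (4 * exp 1 * t ^ (-q)) with hbig | hsmall
  · exact measureReal_le_one.trans hbig.le
  have hbad := measureReal_exists_forall_lt_abs_inner_le_four_mul_exp hXm hind hq0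
    (by positivity) hL hnorm hmom (by positivity) hsmall
  refine (measureReal_mono (Set.compl_subset_comm.mp fun ω hω E hE k => ?_)).trans hbad
  have hconst : (t * (K * √n * L)) ^ 2 / (1 - 2 * (2 / q)) =
      q / (q - 4) * t ^ 2 * K ^ 2 * L ^ 2 * n := by
    rw [mul_pow, mul_pow, mul_pow, sq_sqrt n.cast_nonneg]
    field_simp
    ring
  calc _ ≤ _ := mean_sum_sq_erase_le_of_not_exists_lt_abs (by positivity)
        (by rw [show 2 * (2 / q) = 4 / q by ring]; exact (div_lt_one hq0).mpr hq) hω hE k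
    _ = _ := by rw [hconst, Fintype.card_fin, show 2 * (2 / q) = 4 / q by ring]; ring
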